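/- arXiv:1806.05207 — 4 statements merged into one kernel-verified Lean document; each statement's English description precedes it below -/
import Mathlib

section
/- The series ∑_{k=0}^∞ ((1/2)_k / k!)³ converges and equals Γ(1/4)⁴ / (4π³). (This is the value C_D(-1/2) = ₃F₂(1/2,1/2,1/2;1,1;1) of the interpolated Apéry numbers for ζ(2) at x = -1/2, equal to (Γ(1/4)²/(2π^{3/2}))².) -/
/-!
By the binomial series, `(1/4)_n / n! = B(n + 1/4, 3/4) / B(1/4, 3/4)` are the coefficients of
`(1 - x)^(-1/4)`, so integrating the series against the beta density gives Gauss's sum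
`∑ ((1/4)_n / n!)² = Γ(1/2) / Γ(3/4)²`. Clausen's identity `₂F₁(1/4, 1/4; 1; x)² =
₃F₂(1/2, 1/2, 1/2; 1, 1; x)` says that the Cauchy square of these coefficients is
`((1/2)_k / k!)³`: a Zeilberger certificate shows that both sides satisfy
`(k + 1)³ u (k + 1) = (k + 1/2)³ u k`. The value follows from the Cauchy product and
the reflection formula `Γ(1/4) Γ(3/4) = π √2`.
-/

open Finset Real MeasureTheory ProbabilityTheory Set
open scoped Nat

namespace Real

theorem multichoose_eq_prod_div_factorial (a : ℝ) (n : ℕ) :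
    Ring.multichoose a n = (∏ j ∈ range n, (a + j)) / n ! := by
  have h := Ring.factorial_nsmul_multichoose_eq_ascPochhammer a n
  rw [nsmul_eq_mul, Polynomial.ascPochhammer_smeval_eq_eval] at h
  rw [eq_div_iff (by positivity), mul_comm, h]
  clear h
  induction n with
  | zero => simp
  | succ n ih => rw [ascPochhammer_succ_eval, ih, prod_range_succ]

theorem multichoose_succ (a : ℝ) (n : ℕ) :
    Ring.multichoose a (n + 1) = Ring.multichoose a n * ((a + n) / (n + 1)) := by
  simp only [multichoose_eq_prod_div_factorial, prod_range_succ, Nat.factorial_succ]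
  push_cast
  field_simp

theorem multichoose_nonneg {a : ℝ} (ha : 0 ≤ a) (n : ℕ) : 0 ≤ Ring.multichoose a n := by
  rw [multichoose_eq_prod_div_factorial]
  exact div_nonneg (prod_nonneg fun j _ => by positivity) (by positivity)

theorem hasSum_multichoose_mul_pow (a : ℝ) {x : ℝ} (hx : |x| < 1) :
    HasSum (fun n => Ring.multichoose a n * x ^ n) ((1 - x) ^ (-a)) := by
  have := (one_div_one_sub_rpow_hasFPowerSeriesOnBall_zero a).hasSum
    (y := x) (by simpa [enorm_eq_nnnorm, ← NNReal.coe_lt_one] using hx)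
  simpa [Ring.multichoose_eq, rpow_neg (by linarith [le_abs_self x] : 0 ≤ 1 - x), mul_comm]
    using this

theorem Gamma_add_nat {b : ℝ} (hb : 0 < b) (n : ℕ) :
    Gamma (b + n) = (∏ j ∈ range n, (b + j)) * Gamma b := by
  induction n with
  | zero => simp
  | succ n ih =>
    rw [Nat.cast_succ, ← add_assoc, Gamma_add_one (by positivity), ih, prod_range_succ]
    ring

theorem Gamma_one_fourth_mul_Gamma_three_fourths : Gamma (1 / 4) * Gamma (3 / 4) = π * √2 := by
  rw [show (3 / 4 : ℝ) = 1 - 1 / 4 by norm_num, Gamma_mul_Gamma_one_sub,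
    show π * (1 / 4) = π / 4 by ring, sin_pi_div_four]
  have : √2 ≠ 0 := by positivity
  field_simp
  rw [sq_sqrt zero_le_two]

end Real

theorem hasSum_of_tsum_ofReal_eq {ι : Type*} {f : ι → ℝ} {s : ℝ} (hf : ∀ i, 0 ≤ f i)
    (hs : 0 ≤ s) (h : ∑' i, ENNReal.ofReal (f i) = ENNReal.ofReal s) : HasSum f s := by
  have hf' : Summable f := by
    have := ENNReal.summable_toReal (h ▸ ENNReal.ofReal_ne_top)
    simpa only [ENNReal.toReal_ofReal (hf _)] using this
  rw [← (ENNReal.ofReal_eq_ofReal_iff (tsum_nonneg hf) hs).1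
    (by rw [ENNReal.ofReal_tsum_of_nonneg hf hf', h])]
  exact hf'.hasSum

namespace ProbabilityTheory

theorem lintegral_rpow_mul_one_sub_rpow {α β : ℝ} (hα : 0 < α) (hβ : 0 < β) :
    ∫⁻ x in Ioo 0 1, ENNReal.ofReal (x ^ (α - 1) * (1 - x) ^ (β - 1)) =
      ENNReal.ofReal (beta α β) := by
  have hB := one_div_pos.2 (beta_pos hα hβ)
  have h := lintegral_betaPDF_eq_one hα hβ
  simp_rw [lintegral_betaPDF, mul_assoc, ENNReal.ofReal_mul hB.le] at h
  rw [lintegral_const_mul' _ _ ENNReal.ofReal_ne_top, mul_comm] at h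
  rw [ENNReal.eq_inv_of_mul_eq_one_left h, ← ENNReal.ofReal_inv_of_pos hB, one_div, inv_inv]

theorem beta_add_nat_one_sub {b : ℝ} (hb : 0 < b) (n : ℕ) :
    beta (b + n) (1 - b) = Ring.multichoose b n * beta b (1 - b) := by
  rw [beta, beta, Real.Gamma_add_nat hb, Real.multichoose_eq_prod_div_factorial,
    show b + n + (1 - b) = n + 1 by ring, Real.Gamma_nat_eq_factorial, add_sub_cancel,
    Real.Gamma_one]
  ring

end ProbabilityTheory

theorem hasSum_multichoose_mul_beta_integrand (a b : ℝ) {x : ℝ} (hx : x ∈ Ioo (0 : ℝ) 1) :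
    HasSum (fun n : ℕ => Ring.multichoose a n * (x ^ (b + n - 1) * (1 - x) ^ ((1 - b) - 1)))
      (x ^ (b - 1) * (1 - x) ^ ((1 - a - b) - 1)) := by
  have h1x : 0 < 1 - x := by linarith [hx.2]
  have := (Real.hasSum_multichoose_mul_pow a (abs_lt.2 ⟨by linarith [hx.1], hx.2⟩)).mul_left
    (x ^ (b - 1) * (1 - x) ^ (-b))
  rw [show 1 - a - b - 1 = -b + -a by ring, rpow_add h1x, ← mul_assoc]
  refine this.congr_fun fun n => ?_
  rw [add_sub_right_comm, rpow_add_natCast hx.1.ne', show 1 - b - 1 = -b by ring]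
  ring

theorem tsum_ofReal_multichoose_mul_multichoose_mul_beta {a b : ℝ} (ha : 0 ≤ a) (hb : 0 < b)
    (hab : a + b < 1) :
    ∑' n, ENNReal.ofReal (Ring.multichoose a n * Ring.multichoose b n * beta b (1 - b)) =
      ENNReal.ofReal (beta b (1 - a - b)) := calc
  _ = ∑' n : ℕ, ∫⁻ x in Ioo 0 1, ENNReal.ofReal
        (Ring.multichoose a n * (x ^ (b + n - 1) * (1 - x) ^ ((1 - b) - 1))) := by
    congr 1; ext n
    simp_rw [ENNReal.ofReal_mul (Real.multichoose_nonneg ha n)]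
    rw [lintegral_const_mul' _ _ ENNReal.ofReal_ne_top,
      lintegral_rpow_mul_one_sub_rpow (by positivity) (by linarith), beta_add_nat_one_sub hb,
      ← ENNReal.ofReal_mul (Real.multichoose_nonneg ha n), mul_assoc]
  _ = ∫⁻ x in Ioo 0 1, ∑' n : ℕ, ENNReal.ofReal
        (Ring.multichoose a n * (x ^ (b + n - 1) * (1 - x) ^ ((1 - b) - 1))) :=
    (lintegral_tsum fun n => by fun_prop).symm
  _ = ∫⁻ x in Ioo 0 1, ENNReal.ofReal (x ^ (b - 1) * (1 - x) ^ ((1 - a - b) - 1)) := by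
    refine setLIntegral_congr_fun measurableSet_Ioo fun x hx => ?_
    have h := hasSum_multichoose_mul_beta_integrand a b hx
    rw [← h.tsum_eq, ENNReal.ofReal_tsum_of_nonneg (fun n => ?_) h.summable]
    have := Real.multichoose_nonneg ha n
    have := hx.1
    have : 0 < 1 - x := by linarith [hx.2]
    positivity
  _ = ENNReal.ofReal (beta b (1 - a - b)) := lintegral_rpow_mul_one_sub_rpow hb (by linarith)

/-- Gauss's summation theorem for `₂F₁(a, b; 1; 1)`. -/
theorem Real.hasSum_multichoose_mul_multichoose {a b : ℝ} (ha : 0 ≤ a) (hb : 0 < b)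
    (hab : a + b < 1) :
    HasSum (fun n => Ring.multichoose a n * Ring.multichoose b n)
      (Gamma (1 - a - b) / (Gamma (1 - a) * Gamma (1 - b))) := by
  have hb1 : 0 < 1 - b := by linarith
  have hB := beta_pos hb hb1
  have hsum : HasSum (fun n => Ring.multichoose a n * Ring.multichoose b n * beta b (1 - b))
      (beta b (1 - a - b)) :=
    hasSum_of_tsum_ofReal_eq (fun n => mul_nonneg (mul_nonneg (multichoose_nonneg ha n)
      (multichoose_nonneg hb.le n)) hB.le) (beta_pos hb (by linarith)).le
      (tsum_ofReal_multichoose_mul_multichoose_mul_beta ha hb hab)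
  have hval : Gamma (1 - a - b) / (Gamma (1 - a) * Gamma (1 - b)) =
      beta b (1 - a - b) / beta b (1 - b) := by
    have := (Gamma_pos_of_pos hb).ne'
    have := (Gamma_pos_of_pos hb1).ne'
    have := (Gamma_pos_of_pos (by linarith : 0 < 1 - a)).ne'
    simp only [beta, show b + (1 - a - b) = 1 - a by ring, add_sub_cancel, Gamma_one]
    field_simp
  rw [hval]
  exact (hsum.div_const _).congr_fun fun n => by field_simp

local notation "a₄" => Ring.multichoose (1 / 4 : ℝ)

/-- Zeilberger's rational certificate for `F k i = (a₄ i * a₄ (k - i)) ^ 2` and the recurrence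
`(2k + 2)³ F (k + 1) = (2k + 1)³ F k`. -/
noncomputable def clausenRatio (k i : ℝ) : ℝ :=
  8 * i ^ 2 * (-3 + 26 * i - 64 * i ^ 2 + 32 * i ^ 3 - 27 * k + 136 * k * i - 112 * k * i ^ 2
    - 72 * k ^ 2 + 128 * k ^ 2 * i - 48 * k ^ 3) / (4 * (k - i) + 1) ^ 2

theorem clausenRatio_identity {x w : ℝ} (hx : x + 1 ≠ 0) (hw : w + 1 ≠ 0)
    (hw₃ : 4 * w - 3 ≠ 0) (hw₁ : 4 * w + 1 ≠ 0) :
    (2 * (x + w) + 2) ^ 3 * ((1 / 4 + w) / (w + 1)) ^ 2 - (2 * (x + w) + 1) ^ 3 =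
      clausenRatio (x + w) (x + 1) * ((1 / 4 + x) / (x + 1)) ^ 2 -
        clausenRatio (x + w) x * ((1 / 4 + w) / (w + 1)) ^ 2 := by
  rw [clausenRatio, clausenRatio, show 4 * (x + w - (x + 1)) + 1 = 4 * w - 3 by ring,
    show 4 * (x + w - x) + 1 = 4 * w + 1 by ring, div_pow, div_pow,
    div_mul_div_comm, div_mul_div_comm, div_sub_div _ _ (by positivity) (by positivity),
    eq_div_iff (by positivity)]
  field_simp
  ring

noncomputable def clausenCertificate (k i : ℕ) : ℝ :=
  clausenRatio k i * (a₄ i * a₄ (k + 1 - i)) ^ 2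

theorem clausenCertificate_succ_sub {k i : ℕ} (h : i ≤ k) :
    clausenCertificate k (i + 1) - clausenCertificate k i =
      (2 * k + 2) ^ 3 * (a₄ i * a₄ (k + 1 - i)) ^ 2 -
        (2 * k + 1) ^ 3 * (a₄ i * a₄ (k - i)) ^ 2 := by
  obtain ⟨w, rfl⟩ := Nat.exists_eq_add_of_le h
  have hw₃ : 4 * (w : ℝ) - 3 ≠ 0 := by
    rw [sub_ne_zero]; norm_cast; omega
  have key := clausenRatio_identity (x := i) (w := w) (by positivity) (by positivity) hw₃
    (by positivity)
  simp only [clausenCertificate, show i + w + 1 - (i + 1) = w by omega,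
    show i + w + 1 - i = w + 1 by omega, Nat.add_sub_cancel_left, Real.multichoose_succ]
  push_cast
  linear_combination -(a₄ i * a₄ w) ^ 2 * key

theorem clausenCertificate_zero_right (k : ℕ) : clausenCertificate k 0 = 0 := by
  simp [clausenCertificate, clausenRatio]

theorem clausenCertificate_succ_self (k : ℕ) :
    clausenCertificate k (k + 1) = -((2 * k + 2) ^ 3 * a₄ (k + 1) ^ 2) := by
  simp only [clausenCertificate, clausenRatio, Nat.sub_self, Ring.multichoose_zero_right]
  push_cast
  ring

theorem sum_range_sq_multichoose_quarter (k : ℕ) :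
    ∑ i ∈ range (k + 1), (a₄ i * a₄ (k - i)) ^ 2 =
      Ring.multichoose (1 / 2 : ℝ) k ^ 3 := by
  induction k with
  | zero => simp
  | succ k ih =>
    have tel := sum_range_sub (clausenCertificate k) (k + 1)
    rw [sum_congr rfl fun i hi => clausenCertificate_succ_sub (Nat.le_of_lt_succ (mem_range.1 hi)),
      sum_sub_distrib, ← mul_sum, ← mul_sum, clausenCertificate_succ_self,
      clausenCertificate_zero_right, Nat.succ_eq_add_one, ih] at tel
    rw [sum_range_succ, Nat.sub_self, Ring.multichoose_zero_right, mul_one,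
      Real.multichoose_succ (1 / 2) k]
    generalize ∑ i ∈ range (k + 1), (a₄ i * a₄ (k + 1 - i)) ^ 2 = S at tel ⊢
    have : (k : ℝ) + 1 ≠ 0 := by positivity
    field_simp
    linear_combination tel

/-- The series `∑_{k=0}^∞ ((1/2)_k / k!)³` converges and equals `Γ(1/4)⁴ / (4π³)`.
This is the value `C_D(-1/2) = ₃F₂(1/2,1/2,1/2;1,1;1)` of the interpolated Apéry
numbers for `ζ(2)` at `x = -1/2`. -/
theorem stmt_0 :
    HasSum (fun k : ℕ =>
      ((∏ j ∈ Finset.range k, ((1 : ℝ) / 2 + j)) / (Nat.factorial k : ℝ)) ^ 3)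
      (Real.Gamma (1 / 4) ^ 4 / (4 * Real.pi ^ 3)) := by
  have gauss : HasSum (fun n => a₄ n ^ 2) (√π / Gamma (3 / 4) ^ 2) := by
    have := Real.hasSum_multichoose_mul_multichoose (a := 1 / 4) (b := 1 / 4)
      (by norm_num) (by norm_num) (by norm_num)
    norm_num [← sq, Gamma_one_half_eq] at this
    exact this
  have hnorm : Summable fun n => ‖a₄ n ^ 2‖ := by simpa using gauss.summable
  have cauchy := hasSum_sum_range_mul_of_summable_norm hnorm hnorm
  simp_rw [gauss.tsum_eq, ← mul_pow, sum_range_sq_multichoose_quarter,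
    Real.multichoose_eq_prod_div_factorial] at cauchy
  have h14 := (Gamma_pos_of_pos (by norm_num : (0 : ℝ) < 1 / 4)).ne'
  have hval : √π / Gamma (3 / 4) ^ 2 * (√π / Gamma (3 / 4) ^ 2) =
      Gamma (1 / 4) ^ 4 / (4 * π ^ 3) := by
    rw [eq_div_of_mul_eq h14 ((mul_comm _ _).trans Real.Gamma_one_fourth_mul_Gamma_three_fourths)]
    field_simp
    rw [sq_sqrt pi_pos.le, show √2 ^ 4 = (√2 ^ 2) ^ 2 by ring, sq_sqrt zero_le_two]
    ring
  rwa [hval] at cauchy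
end

section
/- Let p be a prime with p ≡ 3 (mod 4) and set n = (p-1)/2. Then p divides C_B(n) = ∑_{k=0}^{⌊n/3⌋} (-1)^k 3^{n-3k} binom(n,3k) (3k)!/(k!)³. -/
/-!
For a finite field with `2n + 1` elements, `a ↦ a ^ n` is the quadratic character `χ`, and
`∑ x, x ^ e` is `-1` or `0` according as `2n ∣ e` or not (for `e > 0`). Since `C_B(n)` is the
constant term of `(3 + x + y - 1/(xy))^n`, this turns `C_B(n) mod p` into the character sum
`∑_{x,y} χ(((3 + x + y)xy - 1)xy)`. In the coordinates `u = x + y`, `v = xy`, a point `(u, v)` is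
hit `1 + χ(u² - 4v)` times; the part with weight `1` is linear in `u` and sums to zero, leaving
`∑_r S(r)` with `S(r) = ∑_v χ(((r - 1)² - 4v)((r + 2)v - 1)v)` (here `r = u + 1`).
For `r ≠ ±2` an affine change of `v` gives `S(-r) = χ(-1) S(r)`, and `S(±2) = ±1` by direct
computation.
When `p ≡ 3 (mod 4)` we have `χ(-1) = -1`, so `S` is odd and the total sum vanishes.
-/

open Finset

namespace FiniteField

variable {K : Type*} [Field K] [Fintype K] {n : ℕ}

lemma sum_comp_mul_add {M : Type*} [AddCommMonoid M] {a : K} (ha : a ≠ 0) (b : K) (f : K → M) :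
    ∑ x : K, f (a * x + b) = ∑ x : K, f x :=
  Fintype.sum_bijective _ ((AddGroup.addRight_bijective b).comp (mulLeft_bijective₀ a ha)) _ _
    fun _ => rfl

lemma one_le_of_card_eq (hK : Fintype.card K = 2 * n + 1) : 1 ≤ n := by
  have := Fintype.one_lt_card (α := K); omega

lemma ringChar_ne_two_of_card_eq (hK : Fintype.card K = 2 * n + 1) : ringChar K ≠ 2 := by
  rw [Ne, even_card_iff_char_two]; omega

lemma sq_mul_pow (hK : Fintype.card K = 2 * n + 1) {c : K} (hc : c ≠ 0) (a : K) :
    (c ^ 2 * a) ^ n = a ^ n := by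
  have hc' : c ^ (2 * n) = 1 := by
    simpa [hK] using pow_card_sub_one_eq_one c hc
  rw [mul_pow, ← pow_mul, hc', one_mul]

lemma sum_pow_eq_ite (hK : Fintype.card K = 2 * n + 1) {e : ℕ} (he₀ : 0 < e) (he : e < 4 * n) :
    ∑ x : K, x ^ e = if e = 2 * n then -1 else 0 := by
  classical
  have hunits : ∑ x : K, x ^ e = ∑ u : Kˣ, (u ^ e : K) :=
    (Fintype.sum_of_injective Units.val Units.val_injective _ _
      (fun x hx => by
        rw [not_ne_iff.mp fun h => hx ⟨(IsUnit.mk0 x h).unit, rfl⟩, zero_pow he₀.ne'])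
      fun u => by simp).symm
  have hdvd : 2 * n ∣ e ↔ e = 2 * n := by
    refine ⟨fun ⟨m, hm⟩ => ?_, fun h => h ▸ dvd_rfl⟩
    rcases m with _ | _ | m <;> [omega; omega; nlinarith]
  rw [hunits, sum_pow_units, hK, Nat.add_sub_cancel]
  exact if_congr hdvd rfl rfl

lemma sum_mul_add_pow_eq_zero (hK : Fintype.card K = 2 * n + 1) (a b : K) {e : ℕ}
    (he : e < 2 * n) : ∑ x : K, (a * x + b) ^ e = 0 := by
  rcases eq_or_ne a 0 with rfl | ha
  · simp
  · rw [← sum_pow_lt_card_sub_one K e (by omega)]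
    exact sum_comp_mul_add ha b (· ^ e)

lemma cast_card_sqrts (hK : Fintype.card K = 2 * n + 1) [DecidableEq K] (s : K) :
    (#{x : K | x ^ 2 = s} : K) = 1 + s ^ n := by
  have h := congrArg (Int.cast : ℤ → K)
    (quadraticChar_card_sqrts (ringChar_ne_two_of_card_eq hK) s)
  push_cast at h
  rw [quadraticChar_eq_pow_of_char_ne_two' (ringChar_ne_two_of_card_eq hK), hK,
    show (2 * n + 1) / 2 = n by omega] at h
  rw [add_comm]
  simpa [Set.toFinset_ofPred] using h

lemma sum_comp_sq (hK : Fintype.card K = 2 * n + 1) (G : K → K) :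
    ∑ x : K, G (x ^ 2) = ∑ s : K, (1 + s ^ n) * G s := by
  classical
  rw [← Finset.sum_fiberwise' univ (· ^ 2) G]
  refine sum_congr rfl fun s _ => ?_
  rw [sum_const, nsmul_eq_mul, cast_card_sqrts hK]

lemma sum_mul_mul_sub_pow (hK : Fintype.card K = 2 * n + 1) (a c : K) :
    ∑ t : K, (t * (a * t - c)) ^ n = -a ^ n := by
  classical
  have hn := one_le_of_card_eq hK
  have hterm (t : K) :
      (t * (a * t - c)) ^ n = (-c * t⁻¹ + a) ^ n - if t = 0 then a ^ n else 0 := by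
    rcases eq_or_ne t 0 with rfl | ht
    · simp [zero_pow (by omega : n ≠ 0)]
    · rw [if_neg ht, sub_zero, ← sq_mul_pow hK ht (-c * t⁻¹ + a)]
      congr 1
      have htt : t ^ 2 * t⁻¹ = t := by field_simp
      linear_combination c * htt
  simp only [hterm, sum_sub_distrib, sum_ite_eq', mem_univ, if_true]
  rw [Fintype.sum_equiv (Equiv.inv K) (fun t => (-c * t⁻¹ + a) ^ n) (fun u => (-c * u + a) ^ n)
    fun _ => rfl, sum_mul_add_pow_eq_zero hK _ _ (by omega), zero_sub]

lemma sum_sum_comp_add_mul (hK : Fintype.card K = 2 * n + 1) (G : K → K → K) :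
    ∑ x : K, ∑ y : K, G (x + y) (x * y)
      = ∑ u : K, ∑ v : K, (1 + (u ^ 2 - 4 * v) ^ n) * G u v := by
  have h2 : (2 : K) ≠ 0 := Ring.two_ne_zero (ringChar_ne_two_of_card_eq hK)
  have h4 : (4 : K) ≠ 0 := by
    rw [show (4 : K) = 2 * 2 by norm_num]; exact mul_ne_zero h2 h2
  have hfiber (u : K) :
      ∑ x : K, G u (x * (u - x)) = ∑ v : K, (1 + (u ^ 2 - 4 * v) ^ n) * G u v := by
    calc ∑ x : K, G u (x * (u - x)) = ∑ x : K, G u ((u ^ 2 - (2 * x + -u) ^ 2) / 4) := by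
          refine sum_congr rfl fun x _ => ?_
          congr 1; field_simp; ring
      _ = ∑ s : K, (1 + s ^ n) * G u ((u ^ 2 - s) / 4) := by
          rw [sum_comp_mul_add h2 (-u) fun t => G u ((u ^ 2 - t ^ 2) / 4),
            sum_comp_sq hK fun s => G u ((u ^ 2 - s) / 4)]
      _ = ∑ v : K, (1 + (u ^ 2 - 4 * v) ^ n) * G u v := by
          rw [← sum_comp_mul_add (neg_ne_zero.mpr h4) (u ^ 2)]
          congr! 4 <;> [ring; (field_simp; ring)]
  calc ∑ x : K, ∑ y : K, G (x + y) (x * y) = ∑ x : K, ∑ u : K, G u (x * (u - x)) :=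
        sum_congr rfl fun x _ =>
          Fintype.sum_equiv (Equiv.addLeft x) _ _ fun y => by simp
    _ = _ := by rw [sum_comm]; exact sum_congr rfl fun u _ => hfiber u

lemma sum_sum_pow_mul_pow (hK : Fintype.card K = 2 * n + 1) {a b : ℕ} (ha₀ : 0 < a)
    (ha : a < 4 * n) (hb₀ : 0 < b) (hb : b < 4 * n) :
    ∑ x : K, ∑ y : K, x ^ a * y ^ b = if a = 2 * n ∧ b = 2 * n then 1 else 0 := by
  rw [← Fintype.sum_mul_sum, sum_pow_eq_ite hK ha₀ ha, sum_pow_eq_ite hK hb₀ hb]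
  split_ifs <;> simp_all

lemma sum_sum_mul_pow_mul_add_pow (hK : Fintype.card K = 2 * n + 1) {k j : ℕ} (hk : k ≤ n)
    (hj : j ≤ n) :
    ∑ x : K, ∑ y : K, (x * y) ^ (2 * n - k) * (x + y) ^ j
      = if j = 2 * k then ((2 * k).choose k : K) else 0 := by
  have hn := one_le_of_card_eq hK
  calc ∑ x : K, ∑ y : K, (x * y) ^ (2 * n - k) * (x + y) ^ j
      = ∑ i ∈ range (j + 1), (j.choose i : K) *
          ∑ x : K, ∑ y : K, x ^ (2 * n - k + i) * y ^ (2 * n - k + (j - i)) := by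
        simp only [add_pow, mul_sum]
        conv_rhs => rw [sum_comm]; enter [2, x]; rw [sum_comm]
        refine sum_congr rfl fun x _ => sum_congr rfl fun y _ => sum_congr rfl fun i _ => ?_
        ring
    _ = ∑ i ∈ range (j + 1), if i = k then (if j = 2 * k then ((2 * k).choose k : K) else 0)
          else 0 := by
        refine sum_congr rfl fun i hi => ?_
        have hi := mem_range.mp hi
        rw [sum_sum_pow_mul_pow hK (by omega) (by omega) (by omega) (by omega)]
        split_ifs <;> first | omega | (subst_vars; simp)
    _ = if j = 2 * k then ((2 * k).choose k : K) else 0 := by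
        simp only [sum_ite_eq', mem_range]
        split_ifs <;> first | omega | rfl

end FiniteField

namespace ZagierB

open FiniteField

variable {K : Type*} [Field K] [Fintype K] {n : ℕ}

open Nat

def seq (n : ℕ) : ℤ :=
  ∑ k ∈ range (n / 3 + 1),
    (-1 : ℤ) ^ k * 3 ^ (n - 3 * k) * (n.choose (3 * k) : ℤ) * (((3 * k)! / k ! ^ 3 : ℕ) : ℤ)

lemma factorial_three_mul_div (k : ℕ) :
    (3 * k)! / k ! ^ 3 = (3 * k).choose k * (2 * k).choose k := by
  refine Nat.div_eq_of_eq_mul_left (by positivity) ?_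
  have h₃ := Nat.choose_mul_factorial_mul_factorial (show k ≤ 3 * k by omega)
  have h₂ := Nat.choose_mul_factorial_mul_factorial (show k ≤ 2 * k by omega)
  rw [show 3 * k - k = 2 * k by omega] at h₃
  rw [show 2 * k - k = k by omega] at h₂
  rw [← h₃, ← h₂]
  ring

lemma choose_mul_factorial_three_mul_div (n k : ℕ) :
    n.choose (3 * k) * ((3 * k)! / k ! ^ 3)
      = n.choose k * (n - k).choose (2 * k) * (2 * k).choose k := by
  rw [factorial_three_mul_div, ← mul_assoc, Nat.choose_mul (by omega : k ≤ 3 * k),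
    show 3 * k - k = 2 * k by omega]

lemma seq_eq_sum_choose (n : ℕ) :
    seq n = ∑ k ∈ range (n + 1),
      (-1 : ℤ) ^ k * 3 ^ (n - 3 * k) *
        ((n.choose k * (n - k).choose (2 * k) * (2 * k).choose k : ℕ) : ℤ) := by
  rw [seq, ← sum_subset (range_subset_range.mpr (by omega : n / 3 + 1 ≤ n + 1))]
  · refine sum_congr rfl fun k _ => ?_
    rw [mul_assoc, ← Nat.cast_mul, choose_mul_factorial_three_mul_div]
  · intro k hk hk'
    rw [mem_range] at hk hk'
    rw [Nat.choose_eq_zero_of_lt (by omega : n - k < 2 * k)]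
    simp

/-- `(xy)² (3 + x + y - 1/(xy))`, so that `seq n` is the coefficient of `(xy)^(2n)` in
`poly x y ^ n`. -/
def poly {R : Type*} [CommRing R] (x y : R) : R :=
  ((3 + x + y) * (x * y) - 1) * (x * y)

lemma poly_pow {R : Type*} [CommRing R] (n : ℕ) (x y : R) :
    poly x y ^ n = ∑ k ∈ range (n + 1),
      (-1) ^ k * (n.choose k : R) * ((x * y) ^ (2 * n - k) * (x + y + 3) ^ (n - k)) := by
  rw [show poly x y = x * y * (-1 + (x + y + 3) * (x * y)) by rw [poly]; ring, mul_pow, add_pow,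
    mul_sum]
  refine sum_congr rfl fun k hk => ?_
  rw [show 2 * n - k = n + (n - k) by simp at hk; omega, pow_add, mul_pow (x + y + 3)]
  ring

lemma sum_sum_mul_pow_mul_add_add_three_pow (hK : Fintype.card K = 2 * n + 1) {k : ℕ}
    (hk : k ≤ n) :
    ∑ x : K, ∑ y : K, (x * y) ^ (2 * n - k) * (x + y + 3) ^ (n - k)
      = 3 ^ (n - 3 * k) * (((n - k).choose (2 * k) * (2 * k).choose k : ℕ) : K) := by
  calc ∑ x : K, ∑ y : K, (x * y) ^ (2 * n - k) * (x + y + 3) ^ (n - k)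
      = ∑ j ∈ range (n - k + 1), 3 ^ (n - k - j) * ((n - k).choose j : K) *
          ∑ x : K, ∑ y : K, (x * y) ^ (2 * n - k) * (x + y) ^ j := by
        simp only [add_pow _ (3 : K), mul_sum]
        conv_rhs => rw [sum_comm]; enter [2, x]; rw [sum_comm]
        refine sum_congr rfl fun x _ => sum_congr rfl fun y _ => sum_congr rfl fun i _ => ?_
        ring
    _ = ∑ j ∈ range (n - k + 1),
          if j = 2 * k then
            3 ^ (n - 3 * k) * (((n - k).choose (2 * k) * (2 * k).choose k : ℕ) : K)
          else 0 := by
        refine sum_congr rfl fun j hj => ?_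
        rw [sum_sum_mul_pow_mul_add_pow hK hk (by simp at hj; omega)]
        split_ifs with h
        · subst h; push_cast; rw [show n - k - 2 * k = n - 3 * k by omega]; ring
        · simp
    _ = _ := by
        rw [sum_ite_eq', ite_eq_left_iff, mem_range]
        intro h
        rw [Nat.choose_eq_zero_of_lt (by omega)]
        simp

lemma cast_seq (hK : Fintype.card K = 2 * n + 1) :
    (seq n : K) = ∑ x : K, ∑ y : K, poly x y ^ n := by
  simp only [seq_eq_sum_choose, poly_pow, Int.cast_sum, Int.cast_mul, Int.cast_pow, Int.cast_neg,
    Int.cast_one, Int.cast_natCast, Int.cast_ofNat]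
  conv_rhs => enter [2, x]; rw [sum_comm]
  rw [sum_comm]
  refine sum_congr rfl fun k hk => ?_
  simp only [← mul_sum]
  rw [sum_sum_mul_pow_mul_add_add_three_pow hK (by simpa [Nat.lt_succ_iff] using hk)]
  push_cast
  ring

/-- The fibre `u = r - 1` of the sum of `poly ^ n` in the coordinates `u = x + y`, `v = xy`,
weighted by the discriminant `u² - 4v`. -/
def sliceSum (n : ℕ) (r : K) : K :=
  ∑ v : K, (((r - 1) ^ 2 - 4 * v) * (((r + 2) * v - 1) * v)) ^ n

lemma sum_sum_poly_pow (hK : Fintype.card K = 2 * n + 1) :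
    ∑ x : K, ∑ y : K, poly x y ^ n = ∑ r : K, sliceSum n r := by
  have hn := one_le_of_card_eq hK
  have hline : ∑ u : K, ∑ v : K, (((3 + u) * v - 1) * v) ^ n = 0 := by
    rw [sum_comm]
    refine sum_eq_zero fun v _ => ?_
    rw [← sum_mul_add_pow_eq_zero hK (v ^ 2) (3 * v ^ 2 - v) (by omega : n < 2 * n)]
    congr! 2; ring
  calc ∑ x : K, ∑ y : K, poly x y ^ n
      = ∑ u : K, ∑ v : K, (1 + (u ^ 2 - 4 * v) ^ n) * (((3 + u) * v - 1) * v) ^ n := by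
        rw [← sum_sum_comp_add_mul hK fun u v => (((3 + u) * v - 1) * v) ^ n]
        simp only [poly, add_assoc]
    _ = ∑ u : K, ∑ v : K,
          ((((3 + u) * v - 1) * v) ^ n + ((u ^ 2 - 4 * v) * (((3 + u) * v - 1) * v)) ^ n) :=
        sum_congr rfl fun u _ => sum_congr rfl fun v _ => by rw [add_mul, one_mul, ← mul_pow]
    _ = ∑ u : K, ∑ v : K, ((u ^ 2 - 4 * v) * (((3 + u) * v - 1) * v)) ^ n := by
        simp only [sum_add_distrib, hline, zero_add]
    _ = ∑ r : K, sliceSum n r := by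
        rw [← sum_comp_mul_add one_ne_zero (-1)]
        simp only [sliceSum]
        congr! 4 <;> ring

lemma sliceSum_neg_two (hK : Fintype.card K = 2 * n + 1) : sliceSum n (-2 : K) = -1 := by
  have h2 : (2 : K) ≠ 0 := Ring.two_ne_zero (ringChar_ne_two_of_card_eq hK)
  have h4 : (4 : K) ^ n = 1 := by
    rw [show (4 : K) = 2 ^ 2 * 1 by norm_num]; exact (sq_mul_pow hK h2 1).trans (one_pow n)
  rw [← h4, ← sum_mul_mul_sub_pow hK 4 9, sliceSum]
  congr! 2; ring

lemma sliceSum_two (hK : Fintype.card K = 2 * n + 1) (hn : Odd n) : sliceSum n (2 : K) = 1 := by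
  classical
  have hn1 := one_le_of_card_eq hK
  have h2 : (2 : K) ≠ 0 := Ring.two_ne_zero (ringChar_ne_two_of_card_eq hK)
  have h4 : (4 : K) ≠ 0 := by
    rw [show (4 : K) = 2 * 2 by norm_num]; exact mul_ne_zero h2 h2
  have hterm (v : K) : (((2 - 1) ^ 2 - 4 * v) * (((2 + 2) * v - 1) * v)) ^ n
      = -v ^ n + if v = 4⁻¹ then 1 else 0 := by
    rcases eq_or_ne v 4⁻¹ with rfl | hv
    · have : (4 : K)⁻¹ ^ n = 1 := by
        rw [show (4 : K)⁻¹ = 2⁻¹ ^ 2 * 1 by norm_num]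
        exact (sq_mul_pow hK (inv_ne_zero h2) 1).trans (one_pow n)
      have h0 : ((2 : K) - 1) ^ 2 - 4 * 4⁻¹ = 0 := by rw [mul_inv_cancel₀ h4]; norm_num
      rw [if_pos rfl, this, h0, zero_mul, zero_pow (by omega), neg_add_cancel]
    · have hv' : 4 * v - 1 ≠ 0 := by
        contrapose! hv; field_simp; linear_combination hv
      rw [if_neg hv, add_zero, ← hn.neg_pow, ← sq_mul_pow hK hv' (-v)]
      congr 1; ring
  have hsum : ∑ v : K, v ^ n = 0 := sum_pow_lt_card_sub_one K n (by omega)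
  simp only [sliceSum, hterm, sum_add_distrib, sum_neg_distrib, sum_ite_eq', mem_univ, if_true,
    hsum, neg_zero, zero_add]

lemma sliceSum_neg (hK : Fintype.card K = 2 * n + 1) (hn : Odd n) (r : K) :
    sliceSum n (-r) = -sliceSum n r := by
  rcases eq_or_ne r 2 with rfl | hr₂
  · rw [sliceSum_neg_two hK, sliceSum_two hK hn]
  rcases eq_or_ne r (-2) with rfl | hr'
  · rw [neg_neg, sliceSum_neg_two hK, sliceSum_two hK hn, neg_neg]
  have hd : 2 - r ≠ 0 := sub_ne_zero.mpr hr₂.symm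
  have hc : (r + 2) / (2 - r) ≠ 0 :=
    div_ne_zero (by rwa [Ne, add_eq_zero_iff_eq_neg]) hd
  rw [sliceSum, ← sum_comp_mul_add (neg_ne_zero.mpr hc) (2 - r)⁻¹, sliceSum,
    ← sum_neg_distrib]
  refine sum_congr rfl fun v _ => ?_
  set c := (r + 2) / (2 - r)
  have key : ((-r - 1) ^ 2 - 4 * (-c * v + (2 - r)⁻¹)) *
        (((-r + 2) * (-c * v + (2 - r)⁻¹) - 1) * (-c * v + (2 - r)⁻¹))
      = c ^ 2 * -(((r - 1) ^ 2 - 4 * v) * (((r + 2) * v - 1) * v)) := by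
    simp only [c]; field_simp; ring
  rw [key, sq_mul_pow hK hc, hn.neg_pow]

lemma sum_sliceSum_eq_zero (hK : Fintype.card K = 2 * n + 1) (hn : Odd n) :
    ∑ r : K, sliceSum n r = 0 := by
  have h2 : (2 : K) ≠ 0 := Ring.two_ne_zero (ringChar_ne_two_of_card_eq hK)
  have hS : ∑ r : K, sliceSum n r = -∑ r : K, sliceSum n r := by
    calc ∑ r : K, sliceSum n r = ∑ r : K, sliceSum n (-r) :=
          (Equiv.sum_comp (Equiv.neg K) _).symm
      _ = -∑ r : K, sliceSum n r := by simp only [sliceSum_neg hK hn, sum_neg_distrib]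
  have h2S : (2 : K) * ∑ r : K, sliceSum n r = 0 := by linear_combination hS
  exact (mul_eq_zero.mp h2S).resolve_left h2

lemma sum_sum_poly_pow_eq_zero (hK : Fintype.card K = 2 * n + 1) (hn : Odd n) :
    ∑ x : K, ∑ y : K, poly x y ^ n = 0 := by
  rw [sum_sum_poly_pow hK, sum_sliceSum_eq_zero hK hn]

end ZagierB

/-- For primes `p ≡ 3 (mod 4)` and `n = (p-1)/2`, `p` divides
`C_B(n) = ∑_{k=0}^{⌊n/3⌋} (-1)^k 3^{n-3k} binom(n,3k) (3k)!/(k!)³`,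
Zagier's sporadic sequence B. -/
theorem stmt_10 (p : ℕ) (hp : p.Prime) (hp4 : p % 4 = 3) :
    (p : ℤ) ∣
      ∑ k ∈ Finset.range ((p - 1) / 2 / 3 + 1),
        (-1 : ℤ) ^ k * 3 ^ ((p - 1) / 2 - 3 * k) *
          (Nat.choose ((p - 1) / 2) (3 * k) : ℤ) *
          ((Nat.factorial (3 * k) / Nat.factorial k ^ 3 : ℕ) : ℤ) := by
  have : Fact p.Prime := ⟨hp⟩
  have hK : Fintype.card (ZMod p) = 2 * ((p - 1) / 2) + 1 := by
    rw [ZMod.card]; omega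
  have hn : Odd ((p - 1) / 2) := Nat.odd_iff.mpr (by omega)
  change (p : ℤ) ∣ ZagierB.seq ((p - 1) / 2)
  rw [← ZMod.intCast_zmod_eq_zero_iff_dvd, ZagierB.cast_seq hK,
    ZagierB.sum_sum_poly_pow_eq_zero hK hn]
end

section
/- For every x ∈ ℂ with Re(x) > -1, the series C_D(x) = ∑_{k=0}^∞ binom(x,k)² binom(x+k,k) converges absolutely, and C_D satisfies the homogeneous functional equation (x+2)² C_D(x+2) − (11x² + 33x + 25) C_D(x+1) − (x+1)² C_D(x) = 0 for all x ∈ ℂ with Re(x) > -1. -/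
/-!
The ratio of consecutive summands is `(1 - (x+1)/(k+1))² (1 + x/(k+1))`, whose modulus is
`1 - (Re x + 2)/k + O(1/k²)`. Raabe's test then bounds the summands by `O(k^(-s))` for every
`s < Re x + 2`, which is summable as soon as `Re x > -1`.

The functional equation is creative telescoping: the `k`-th summand of the left-hand side is
`G(k) - G(k-1)` (with `G(-1) = 0`) for
`G(k) = (k² + 3(2x+3)k - (11x²+31x+22)) binom(x+1,k)² binom(x+1+k,k)`,
and `G(k) = O(k^(2-s))` for every `s < Re x + 3`, so `G(k) → 0`.
-/

/-- The summand `binom(x,k)² binom(x+k,k)` of the interpolated Apéry series for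
`ζ(2)`, where `binom(x,k) = (∏_{j=0}^{k-1}(x-j))/k!` and
`binom(x+k,k) = (∏_{j=1}^{k}(x+j))/k!`. -/
noncomputable def aperyTerm2 (x : ℂ) (k : ℕ) : ℂ :=
  ((∏ j ∈ Finset.range k, (x - j)) / (Nat.factorial k : ℂ)) ^ 2 *
    ((∏ j ∈ Finset.range k, (x + (j + 1))) / (Nat.factorial k : ℂ))

/-- The interpolated Apéry numbers for `ζ(2)`:
`C_D(x) = ∑_{k≥0} binom(x,k)² binom(x+k,k)`. -/
noncomputable def CD (x : ℂ) : ℂ := ∑' k : ℕ, aperyTerm2 x k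

open Filter Asymptotics Topology Finset

lemma one_sub_div_mul_add_one_rpow_le {s n : ℝ} (hs : 0 ≤ s) (hn : 0 < n) :
    (1 - s / n) * (n + 1) ^ s ≤ n ^ s := by
  have hexp : (n + 1) ^ s ≤ n ^ s * Real.exp (s / n) := by
    calc (n + 1) ^ s = n ^ s * (1 + 1 / n) ^ s := by
          rw [← Real.mul_rpow hn.le (by positivity)]; field_simp
      _ ≤ n ^ s * Real.exp (1 / n) ^ s := by
          gcongr; linarith [Real.add_one_le_exp (1 / n)]
      _ = n ^ s * Real.exp (s / n) := by rw [← Real.exp_mul]; ring_nf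
  calc (1 - s / n) * (n + 1) ^ s ≤ Real.exp (-(s / n)) * (n ^ s * Real.exp (s / n)) := by
        gcongr
        · exact (Real.add_one_le_exp _).trans' (by linarith)
    _ = n ^ s := by
        rw [mul_left_comm, ← Real.exp_add, neg_add_cancel, Real.exp_zero, mul_one]

lemma isBigO_rpow_neg_of_le_one_sub_div {u : ℕ → ℝ} (hu : ∀ k, 0 ≤ u k) {s : ℝ} (hs : 0 ≤ s)
    (h : ∀ᶠ k : ℕ in atTop, u (k + 1) ≤ (1 - s / (k + 1)) * u k) :
    u =O[atTop] fun k => ((k : ℝ) + 1) ^ (-s) := by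
  obtain ⟨K, hK⟩ := eventually_atTop.1 h
  have hmono : ∀ k ≥ K, u k * ((k : ℝ) + 1) ^ s ≤ u K * ((K : ℝ) + 1) ^ s := by
    intro k hk
    induction k, hk using Nat.le_induction with
    | base => exact le_rfl
    | succ k hk ih =>
      refine le_trans ?_ ih
      calc u (k + 1) * (((k + 1 : ℕ) : ℝ) + 1) ^ s
          ≤ (1 - s / (k + 1)) * u k * ((k : ℝ) + 1 + 1) ^ s := by
            push_cast; gcongr; exact hK k hk
        _ = u k * ((1 - s / (k + 1)) * ((k : ℝ) + 1 + 1) ^ s) := by ring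
        _ ≤ u k * ((k : ℝ) + 1) ^ s := by
            gcongr
            · exact hu k
            · exact one_sub_div_mul_add_one_rpow_le hs (by positivity)
  refine IsBigO.of_bound (u K * ((K : ℝ) + 1) ^ s) (eventually_atTop.2 ⟨K, fun k hk => ?_⟩)
  rw [Real.norm_of_nonneg (hu k), Real.norm_of_nonneg (by positivity),
    Real.rpow_neg (by positivity), ← div_eq_mul_inv, le_div_iff₀ (by positivity)]
  exact hmono k hk

lemma isBigO_rpow_neg_of_tendsto_raabe {u r : ℕ → ℝ} (hu : ∀ k, 0 ≤ u k)
    (hr : ∀ k, u (k + 1) = r k * u k) {L s : ℝ} (hs : 0 ≤ s) (hsL : s < L)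
    (h : Tendsto (fun k : ℕ => ((k : ℝ) + 1) * (1 - r k)) atTop (𝓝 L)) :
    u =O[atTop] fun k => ((k : ℝ) + 1) ^ (-s) := by
  refine isBigO_rpow_neg_of_le_one_sub_div hu hs ?_
  filter_upwards [h.eventually (lt_mem_nhds hsL)] with k hk
  rw [hr]
  gcongr
  · exact hu k
  · rw [le_sub_comm, div_le_iff₀ (by positivity)]
    linarith

lemma summable_rpow_neg_natCast_add_one {s : ℝ} (hs : 1 < s) :
    Summable fun k : ℕ => ((k : ℝ) + 1) ^ (-s) := by
  have := (summable_nat_add_iff 1).2 (Real.summable_nat_rpow.2 (neg_lt_neg hs))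
  simpa using this

lemma tendsto_natCast_add_one_sq_mul_rpow_neg {s : ℝ} (hs : 2 < s) :
    Tendsto (fun k : ℕ => ((k : ℝ) + 1) ^ 2 * ((k : ℝ) + 1) ^ (-s)) atTop (𝓝 0) := by
  have h := (tendsto_rpow_neg_atTop (by linarith : 0 < s - 2)).comp
    (tendsto_atTop_add_const_right _ 1 tendsto_natCast_atTop_atTop)
  refine h.congr fun k => ?_
  rw [Function.comp_apply, ← Real.rpow_natCast, ← Real.rpow_add (by positivity)]
  congr 1
  ring

lemma norm_natCast_sq_add_mul_sub_le (b c : ℂ) (k : ℕ) :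
    ‖(k : ℂ) ^ 2 + b * k - c‖ ≤ (1 + ‖b‖ + ‖c‖) * ((k : ℝ) + 1) ^ 2 := by
  calc ‖(k : ℂ) ^ 2 + b * k - c‖ ≤ ‖(k : ℂ) ^ 2‖ + ‖b * k‖ + ‖c‖ :=
        (norm_sub_le _ _).trans (by gcongr; exact norm_add_le _ _)
    _ = (k : ℝ) ^ 2 + ‖b‖ * k + ‖c‖ := by simp
    _ ≤ (1 + ‖b‖ + ‖c‖) * ((k : ℝ) + 1) ^ 2 := by
        have hk : (0 : ℝ) ≤ k := k.cast_nonneg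
        nlinarith [norm_nonneg b, norm_nonneg c, mul_nonneg (norm_nonneg b) hk,
          mul_nonneg (norm_nonneg b) (mul_nonneg hk hk), mul_nonneg (norm_nonneg c) hk,
          mul_nonneg (norm_nonneg c) (mul_nonneg hk hk)]

lemma hasDerivAt_norm_one_add_mul (c : ℂ) :
    HasDerivAt (fun t : ℝ => ‖1 + t * c‖) c.re 0 := by
  have hlin : HasDerivAt (fun t : ℝ => 1 + (t : ℂ) * c) c 0 := by
    simpa using ((hasDerivAt_id (0 : ℝ)).ofReal_comp.mul_const c).const_add 1
  have := hlin.norm_sq.sqrt (by simp)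
  simpa [Real.sqrt_sq (norm_nonneg _)] using this

lemma prod_range_succ_add_one_sub (x : ℂ) (k : ℕ) :
    ∏ j ∈ range (k + 1), (x + 1 - j) = (x + 1) * ∏ j ∈ range k, (x - j) := by
  rw [prod_range_succ', mul_comm]
  push_cast
  simp only [add_sub_add_right_eq_sub, sub_zero]

lemma prod_range_succ_add_add_one (x : ℂ) (k : ℕ) :
    ∏ j ∈ range (k + 1), (x + (j + 1)) = (x + 1) * ∏ j ∈ range k, (x + 1 + (j + 1)) := by
  rw [prod_range_succ', mul_comm]
  push_cast
  congr 1
  · ring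
  · exact prod_congr rfl fun j _ => by ring

lemma aperyTerm2_eq (x : ℂ) (k : ℕ) :
    aperyTerm2 x k = (∏ j ∈ range k, (x - j)) ^ 2 * (∏ j ∈ range k, (x + (j + 1))) /
      (k.factorial : ℂ) ^ 3 := by
  rw [aperyTerm2]; ring

lemma aperyTerm2_zero (x : ℂ) : aperyTerm2 x 0 = 1 := by
  simp [aperyTerm2]

lemma natCast_add_one_pow_mul_aperyTerm2_succ (x : ℂ) (k : ℕ) :
    ((k : ℂ) + 1) ^ 3 * aperyTerm2 x (k + 1) =
      (∏ j ∈ range (k + 1), (x - j)) ^ 2 * (∏ j ∈ range (k + 1), (x + (j + 1))) /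
        (k.factorial : ℂ) ^ 3 := by
  have hk : ((k : ℂ) + 1) ≠ 0 := by exact_mod_cast k.succ_ne_zero
  have hf : (k.factorial : ℂ) ≠ 0 := by exact_mod_cast k.factorial_ne_zero
  rw [aperyTerm2_eq, Nat.factorial_succ]
  push_cast
  field_simp

lemma aperyTerm2_succ (x : ℂ) (k : ℕ) :
    ((k : ℂ) + 1) ^ 3 * aperyTerm2 x (k + 1) = (x - k) ^ 2 * (x + k + 1) * aperyTerm2 x k := by
  rw [natCast_add_one_pow_mul_aperyTerm2_succ, aperyTerm2_eq, prod_range_succ, prod_range_succ]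
  ring

lemma aperyTerm2_add_one_succ (x : ℂ) (k : ℕ) :
    ((k : ℂ) + 1) ^ 3 * aperyTerm2 (x + 1) (k + 1) =
      (x + 1) * (x + k + 1) * (x + k + 2) * aperyTerm2 x k := by
  have hQ : (x + 1) * ∏ j ∈ range (k + 1), (x + 1 + (j + 1)) =
      (∏ j ∈ range k, (x + (j + 1))) * (x + k + 1) * (x + k + 2) := by
    rw [← prod_range_succ_add_add_one, prod_range_succ, prod_range_succ]
    push_cast; ring
  rw [natCast_add_one_pow_mul_aperyTerm2_succ, aperyTerm2_eq, prod_range_succ_add_one_sub,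
    mul_div_assoc', div_left_inj' (pow_ne_zero 3 (Nat.cast_ne_zero.2 k.factorial_ne_zero))]
  linear_combination (x + 1) * (∏ j ∈ range k, (x - j)) ^ 2 * hQ

lemma add_one_mul_aperyTerm2_succ (x : ℂ) (k : ℕ) :
    (x + 1) * ((k : ℂ) + 1) ^ 3 * aperyTerm2 x (k + 1) =
      (x - k) ^ 2 * (x + 1 - k) ^ 2 * aperyTerm2 (x + 1) k := by
  have hP :
      (x + 1 - k) * ∏ j ∈ range k, (x + 1 - j) = (x + 1) * ∏ j ∈ range k, (x - j) := by
    rw [← prod_range_succ_add_one_sub, prod_range_succ, mul_comm]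
  rw [mul_assoc, natCast_add_one_pow_mul_aperyTerm2_succ, aperyTerm2_eq, prod_range_succ,
    prod_range_succ_add_add_one, mul_div_assoc', mul_div_assoc',
    div_left_inj' (pow_ne_zero 3 (Nat.cast_ne_zero.2 k.factorial_ne_zero))]
  linear_combination -(x - k) ^ 2 * (∏ j ∈ range k, (x + 1 + (j + 1))) *
    ((x + 1 - k) * ∏ j ∈ range k, (x + 1 - j) + (x + 1) * ∏ j ∈ range k, (x - j)) * hP

noncomputable def aperyRatio (x : ℂ) (t : ℝ) : ℝ := ‖1 - t * (x + 1)‖ ^ 2 * ‖1 + t * x‖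

lemma aperyRatio_zero (x : ℂ) : aperyRatio x 0 = 1 := by
  simp [aperyRatio]

lemma norm_aperyTerm2_succ (x : ℂ) (k : ℕ) :
    ‖aperyTerm2 x (k + 1)‖ = aperyRatio x ((k : ℝ) + 1)⁻¹ * ‖aperyTerm2 x k‖ := by
  have hk : ((k : ℂ) + 1) ≠ 0 := by exact_mod_cast k.succ_ne_zero
  have h : aperyTerm2 x (k + 1) =
      (-(1 - ((k : ℂ) + 1)⁻¹ * (x + 1))) ^ 2 * (1 + ((k : ℂ) + 1)⁻¹ * x) * aperyTerm2 x k := by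
    apply mul_left_cancel₀ (pow_ne_zero 3 hk)
    rw [aperyTerm2_succ]
    field_simp
    ring
  rw [h, aperyRatio]
  push_cast
  simp only [norm_mul, norm_pow, norm_neg]

lemma hasDerivAt_aperyRatio (x : ℂ) : HasDerivAt (aperyRatio x) (-(x.re + 2)) 0 := by
  have h₁ := hasDerivAt_norm_one_add_mul (-(x + 1))
  have h₂ := hasDerivAt_norm_one_add_mul x
  have hfun : aperyRatio x = fun t : ℝ => ‖1 + t * -(x + 1)‖ ^ 2 * ‖1 + t * x‖ := by
    funext t
    simp only [aperyRatio, sub_eq_add_neg, mul_neg]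
  rw [hfun]
  refine ((h₁.fun_pow 2).fun_mul h₂).congr_deriv ?_
  simp only [Complex.ofReal_zero, zero_mul, add_zero, norm_one, one_pow, mul_one, one_mul,
    Complex.neg_re, Complex.add_re, Complex.one_re]
  ring

lemma tendsto_raabe_aperyRatio (x : ℂ) :
    Tendsto (fun k : ℕ => ((k : ℝ) + 1) * (1 - aperyRatio x ((k : ℝ) + 1)⁻¹)) atTop
      (𝓝 (x.re + 2)) := by
  have hslope := (hasDerivAt_aperyRatio x).tendsto_slope_zero_right
  have hinv : Tendsto (fun k : ℕ => ((k : ℝ) + 1)⁻¹) atTop (𝓝[>] 0) := by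
    refine tendsto_nhdsWithin_iff.2 ⟨?_, .of_forall fun k => Set.mem_Ioi.2 (by positivity)⟩
    simpa only [one_div] using tendsto_one_div_add_atTop_nhds_zero_nat (𝕜 := ℝ)
  have := (hslope.comp hinv).neg
  convert this using 2 with k
  · simp only [Function.comp_apply, zero_add, smul_eq_mul, inv_inv, aperyRatio_zero]
    ring
  · ring

lemma isBigO_aperyTerm2 (x : ℂ) {s : ℝ} (hs : 0 ≤ s) (hsx : s < x.re + 2) :
    aperyTerm2 x =O[atTop] fun k => ((k : ℝ) + 1) ^ (-s) :=
  (isBigO_rpow_neg_of_tendsto_raabe (fun _ => norm_nonneg _) (norm_aperyTerm2_succ x) hs hsx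
    (tendsto_raabe_aperyRatio x)).of_norm_left

lemma summable_norm_aperyTerm2 (x : ℂ) (hx : -1 < x.re) :
    Summable fun k => ‖aperyTerm2 x k‖ :=
  summable_of_isBigO_nat
    (summable_rpow_neg_natCast_add_one (s := (x.re + 3) / 2) (by linarith))
    (isBigO_aperyTerm2 x (by linarith) (by linarith)).norm_left

noncomputable def aperyRecTerm (x : ℂ) (k : ℕ) : ℂ :=
  (x + 2) ^ 2 * aperyTerm2 (x + 2) k - (11 * x ^ 2 + 33 * x + 25) * aperyTerm2 (x + 1) k -
    (x + 1) ^ 2 * aperyTerm2 x k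

-- Found by Zeilberger's algorithm.
noncomputable def aperyCert (x : ℂ) (k : ℕ) : ℂ :=
  ((k : ℂ) ^ 2 + 3 * (2 * x + 3) * k - (11 * x ^ 2 + 31 * x + 22)) * aperyTerm2 (x + 1) k

lemma aperyRecTerm_zero (x : ℂ) : aperyRecTerm x 0 = aperyCert x 0 := by
  simp only [aperyRecTerm, aperyCert, aperyTerm2_zero]
  push_cast
  ring

lemma aperyRecTerm_succ (x : ℂ) (k : ℕ) :
    aperyRecTerm x (k + 1) = aperyCert x (k + 1) - aperyCert x k := by
  have hk : ((k : ℂ) + 1) ^ 3 ≠ 0 := by exact_mod_cast pow_ne_zero 3 k.succ_ne_zero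
  have h2 := aperyTerm2_add_one_succ (x + 1) k
  have h1 := aperyTerm2_succ (x + 1) k
  have h0 := add_one_mul_aperyTerm2_succ x k
  rw [show x + 1 + 1 = x + 2 by ring] at h2
  apply mul_left_cancel₀ hk
  simp only [aperyRecTerm, aperyCert]
  push_cast
  linear_combination (x + 2) ^ 2 * h2 - (x + 1) * h0 - ((k + 1 : ℂ) ^ 2 + 3 * (2 * x + 3) * (k + 1)
    + 2 * x + 3) * h1

lemma sum_range_succ_aperyRecTerm (x : ℂ) (n : ℕ) :
    ∑ k ∈ range (n + 1), aperyRecTerm x k = aperyCert x n := by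
  induction n with
  | zero => rw [zero_add, sum_range_one, aperyRecTerm_zero]
  | succ n ih => rw [sum_range_succ, ih, aperyRecTerm_succ]; ring

lemma tendsto_aperyCert {x : ℂ} (hx : -1 < x.re) : Tendsto (aperyCert x) atTop (𝓝 0) := by
  have ha := isBigO_aperyTerm2 (x + 1) (s := (x.re + 5) / 2) (by linarith)
    (by simp only [Complex.add_re, Complex.one_re]; linarith)
  have hq : (fun k : ℕ => (k : ℂ) ^ 2 + 3 * (2 * x + 3) * k - (11 * x ^ 2 + 31 * x + 22))
      =O[atTop] fun k => ((k : ℝ) + 1) ^ 2 :=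
    IsBigO.of_bound _ (.of_forall fun k => by
      rw [Real.norm_of_nonneg (by positivity)]
      exact norm_natCast_sq_add_mul_sub_le _ _ k)
  exact (hq.mul ha).trans_tendsto (tendsto_natCast_add_one_sq_mul_rpow_neg (by linarith))

/-- For every `x ∈ ℂ` with `Re(x) > -1`, the series
`C_D(x) = ∑_k binom(x,k)² binom(x+k,k)` converges absolutely, and `C_D` satisfies
the homogeneous functional equation
`(x+2)² C_D(x+2) − (11x²+33x+25) C_D(x+1) − (x+1)² C_D(x) = 0` there. -/
theorem stmt_18 :
    (∀ x : ℂ, -1 < x.re → Summable (fun k : ℕ => ‖aperyTerm2 x k‖)) ∧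
    ∀ x : ℂ, -1 < x.re →
      (x + 2) ^ 2 * CD (x + 2) - (11 * x ^ 2 + 33 * x + 25) * CD (x + 1) -
          (x + 1) ^ 2 * CD x = 0 := by
  refine ⟨summable_norm_aperyTerm2, fun x hx => ?_⟩
  have hasSum_CD : ∀ y : ℂ, -1 < y.re → HasSum (aperyTerm2 y) (CD y) :=
    fun y hy => (summable_norm_aperyTerm2 y hy).of_norm.hasSum
  have h₁ := hasSum_CD (x + 1) (by simp only [Complex.add_re, Complex.one_re]; linarith)
  have h₂ := hasSum_CD (x + 2) (by simp only [Complex.add_re, Complex.re_ofNat]; linarith)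
  have hsum : HasSum (aperyRecTerm x) ((x + 2) ^ 2 * CD (x + 2) -
      (11 * x ^ 2 + 33 * x + 25) * CD (x + 1) - (x + 1) ^ 2 * CD x) :=
    ((h₂.mul_left _).sub (h₁.mul_left _)).sub ((hasSum_CD x hx).mul_left _)
  refine tendsto_nhds_unique hsum.tendsto_sum_nat ((tendsto_add_atTop_iff_nat 1).1 ?_)
  simpa only [sum_range_succ_aperyRecTerm] using tendsto_aperyCert hx
end

section
/- For every x ∈ ℂ there exists a constant C > 0 such that for all integers k ≥ 1, | binom(x,k)² binom(x+k,k)² − sin²(πx)/(π² k²) | ≤ C/k³. (That is, the summand of the interpolated Apéry series A(x) satisfies binom(x,k)² binom(x+k,k)² = (sin(πx)/(πk))² + O(1/k³) as k → ∞.) -/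
/-!
For `k = m + 1` the product `binom(x,k) binom(x+k,k)` equals `(-1)^m (x + k) E_m(x) / k²`, where
`E_m(x) = x ∏_{1 ≤ j ≤ m} (1 - x²/j²)` is a partial product of Euler's product for `sin(πx)/π`.
The tail `∏_{j > m} (1 - x²/j²)` is `1 + O(1/k)` because `∑_{j > m} ‖x‖²/j² ≤ 2‖x‖²/k`,
so `E_m(x) = sin(πx)/π + O(1/k)`, and squaring `(x + k) E_m(x) / k² = sin(πx)/(πk) + O(1/k²)`
gives the claim.
-/

open Finset Filter Topology Real
open scoped Nat

theorem Real.exp_sub_one_le_mul_exp (t : ℝ) : exp t - 1 ≤ t * exp t := by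
  calc exp t - 1 = exp t * (1 - exp (-t)) := by
        rw [mul_sub, mul_one, ← exp_add, add_neg_cancel, exp_zero]
    _ ≤ exp t * t := by gcongr; linarith [add_one_le_exp (-t)]
    _ = t * exp t := mul_comm _ _

section NormedCommRing

variable {ι R : Type*} [NormedCommRing R]

theorem norm_sq_sub_sq_le (u v : R) : ‖u ^ 2 - v ^ 2‖ ≤ ‖u - v‖ * (‖u‖ + ‖v‖) := by
  rw [sq_sub_sq, mul_comm]
  exact (norm_mul_le _ _).trans (by gcongr; exact norm_add_le _ _)

variable [NormOneClass R]

theorem Finset.norm_prod_one_add_le_exp (s : Finset ι) (f : ι → R) :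
    ‖∏ i ∈ s, (1 + f i)‖ ≤ exp (∑ i ∈ s, ‖f i‖) := by
  have := s.norm_prod_one_add_sub_one_le f
  have := norm_le_norm_sub_add (∏ i ∈ s, (1 + f i)) 1
  rw [norm_one] at this
  linarith

theorem Finset.norm_prod_union_one_add_sub_le [DecidableEq ι] (s t : Finset ι) (hst : Disjoint s t)
    (f : ι → R) :
    ‖∏ i ∈ s ∪ t, (1 + f i) - ∏ i ∈ s, (1 + f i)‖ ≤
      exp (∑ i ∈ s, ‖f i‖) * ((∑ i ∈ t, ‖f i‖) * exp (∑ i ∈ t, ‖f i‖)) := by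
  rw [prod_union hst, ← mul_sub_one]
  refine (norm_mul_le _ _).trans (mul_le_mul (s.norm_prod_one_add_le_exp f) ?_ (norm_nonneg _)
    (exp_nonneg _))
  exact (t.norm_prod_one_add_sub_one_le f).trans (exp_sub_one_le_mul_exp _)

end NormedCommRing

theorem sum_Ico_inv_add_one_sq_le (m n : ℕ) :
    ∑ j ∈ Ico m n, (((j : ℝ) + 1) ^ 2)⁻¹ ≤ 2 / ((m : ℝ) + 1) := by
  have := sum_Ioo_inv_sq_le (α := ℝ) m (n + 1)
  rw [← Finset.Ico_add_one_left_eq_Ioo, ← sum_Ico_add' (fun i : ℕ => ((i : ℝ) ^ 2)⁻¹)] at this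
  simpa using this

/-- Partial products of Euler's product `sin (π x) / π = x ∏_{j ≥ 1} (1 - x² / j²)`. -/
noncomputable def eulerSinProd (x : ℂ) (n : ℕ) : ℂ :=
  x * ∏ j ∈ range n, (1 - x ^ 2 / ((j : ℂ) + 1) ^ 2)

namespace eulerSinProd

theorem tendsto (x : ℂ) : Tendsto (eulerSinProd x) atTop (𝓝 (Complex.sin (π * x) / π)) := by
  have hπ : (π : ℂ) ≠ 0 := Complex.ofReal_ne_zero.mpr pi_ne_zero
  convert (Complex.tendsto_euler_sin_prod x).div_const (π : ℂ) using 2 with n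
  rw [eulerSinProd, mul_assoc, mul_div_cancel_left₀ _ hπ]

theorem sum_norm_Ico_le (x : ℂ) (m n : ℕ) :
    ∑ j ∈ Ico m n, ‖-(x ^ 2 / ((j : ℂ) + 1) ^ 2)‖ ≤ 2 * ‖x‖ ^ 2 / (m + 1) := by
  have h (j : ℕ) : ‖-(x ^ 2 / ((j : ℂ) + 1) ^ 2)‖ = ‖x‖ ^ 2 * (((j : ℝ) + 1) ^ 2)⁻¹ := by
    rw [norm_neg, norm_div, norm_pow, norm_pow, ← Nat.cast_add_one, Complex.norm_natCast,
      div_eq_mul_inv, Nat.cast_add_one]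
  simp_rw [h, ← mul_sum]
  rw [mul_comm 2, mul_div_assoc]
  exact mul_le_mul_of_nonneg_left (sum_Ico_inv_add_one_sq_le m n) (by positivity)

theorem norm_le (x : ℂ) (n : ℕ) : ‖eulerSinProd x n‖ ≤ ‖x‖ * exp (2 * ‖x‖ ^ 2) := by
  rw [eulerSinProd, norm_mul]
  gcongr
  simp_rw [sub_eq_add_neg]
  refine ((range n).norm_prod_one_add_le_exp _).trans (exp_le_exp.mpr ?_)
  simpa using sum_norm_Ico_le x 0 n

theorem norm_sub_le (x : ℂ) {m n : ℕ} (hmn : m ≤ n) :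
    ‖eulerSinProd x n - eulerSinProd x m‖ ≤ 2 * ‖x‖ ^ 3 * exp (2 * ‖x‖ ^ 2) ^ 2 / (m + 1) := by
  have hsplit : range n = range m ∪ Ico m n := by
    rw [range_eq_Ico, range_eq_Ico, Ico_union_Ico_eq_Ico (Nat.zero_le _) hmn]
  have hdisj : Disjoint (range m) (Ico m n) := by
    rw [range_eq_Ico]; exact Ico_disjoint_Ico_consecutive 0 m n
  have hhead := sum_norm_Ico_le x 0 m
  have htail := sum_norm_Ico_le x m n
  rw [← range_eq_Ico, Nat.cast_zero, zero_add, div_one] at hhead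
  have htail' : 2 * ‖x‖ ^ 2 / (m + 1) ≤ 2 * ‖x‖ ^ 2 :=
    div_le_self (by positivity) (by linarith [(m.cast_nonneg : (0 : ℝ) ≤ m)])
  rw [eulerSinProd, eulerSinProd, ← mul_sub, norm_mul, hsplit]
  simp only [sub_eq_add_neg (1 : ℂ)]
  calc ‖x‖ * ‖∏ j ∈ range m ∪ Ico m n, (1 + -(x ^ 2 / ((j : ℂ) + 1) ^ 2)) -
        ∏ j ∈ range m, (1 + -(x ^ 2 / ((j : ℂ) + 1) ^ 2))‖
      ≤ ‖x‖ * (exp (2 * ‖x‖ ^ 2) * (2 * ‖x‖ ^ 2 / (m + 1) * exp (2 * ‖x‖ ^ 2))) := by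
        refine mul_le_mul_of_nonneg_left
          ((norm_prod_union_one_add_sub_le _ _ hdisj _).trans ?_) (norm_nonneg _)
        gcongr exp ?_ * (?_ * exp ?_)
        exact htail.trans htail'
    _ = 2 * ‖x‖ ^ 3 * exp (2 * ‖x‖ ^ 2) ^ 2 / (m + 1) := by ring

theorem norm_sin_le (x : ℂ) : ‖Complex.sin (π * x) / π‖ ≤ ‖x‖ * exp (2 * ‖x‖ ^ 2) :=
  le_of_tendsto (tendsto x).norm (Eventually.of_forall (norm_le x))

theorem norm_sub_sin_le (x : ℂ) (m : ℕ) :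
    ‖eulerSinProd x m - Complex.sin (π * x) / π‖ ≤
      2 * ‖x‖ ^ 3 * exp (2 * ‖x‖ ^ 2) ^ 2 / (m + 1) := by
  rw [norm_sub_rev]
  refine le_of_tendsto ((tendsto x).sub_const _).norm ?_
  filter_upwards [eventually_ge_atTop m] with n hn using norm_sub_le x hn

end eulerSinProd

theorem norm_sq_sub_sq_le_of_approx {𝕜 : Type*} [NormedField 𝕜] (x k E s : 𝕜) {B c : ℝ}
    (hk : 1 ≤ ‖k‖) (hE : ‖E‖ ≤ B) (hs : ‖s‖ ≤ B) (hEs : ‖E - s‖ ≤ c / ‖k‖) :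
    ‖((x + k) * E / k ^ 2) ^ 2 - (s / k) ^ 2‖ ≤ (‖x‖ * B + c) * (‖x‖ + 2) * B / ‖k‖ ^ 3 := by
  have hk0 : k ≠ 0 := norm_pos_iff.mp (by linarith)
  have hB : 0 ≤ B := (norm_nonneg _).trans hE
  have hc : ‖k‖ * ‖E - s‖ ≤ c := by rwa [le_div_iff₀' (by linarith)] at hEs
  have hc0 : 0 ≤ c := (by positivity : 0 ≤ ‖k‖ * ‖E - s‖).trans hc
  have hdiff : ‖(x + k) * E / k ^ 2 - s / k‖ ≤ (‖x‖ * B + c) / ‖k‖ ^ 2 := by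
    rw [show (x + k) * E / k ^ 2 - s / k = (x * E + k * (E - s)) / k ^ 2 by field_simp; ring,
      norm_div, norm_pow]
    gcongr
    refine (norm_add_le _ _).trans ?_
    rw [norm_mul, norm_mul]
    gcongr
  have hu : ‖(x + k) * E / k ^ 2‖ ≤ (‖x‖ + 1) * B / ‖k‖ := by
    rw [norm_div, norm_mul, norm_pow, div_le_div_iff₀ (by positivity) (by positivity)]
    have : ‖x + k‖ ≤ (‖x‖ + 1) * ‖k‖ := by nlinarith [norm_add_le x k, norm_nonneg x]
    calc ‖x + k‖ * ‖E‖ * ‖k‖ ≤ (‖x‖ + 1) * ‖k‖ * B * ‖k‖ := by gcongr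
      _ = (‖x‖ + 1) * B * ‖k‖ ^ 2 := by ring
  have hv : ‖s / k‖ ≤ B / ‖k‖ := by rw [norm_div]; gcongr
  calc _ ≤ ‖(x + k) * E / k ^ 2 - s / k‖ * (‖(x + k) * E / k ^ 2‖ + ‖s / k‖) :=
        norm_sq_sub_sq_le _ _
    _ ≤ (‖x‖ * B + c) / ‖k‖ ^ 2 * ((‖x‖ + 1) * B / ‖k‖ + B / ‖k‖) := by gcongr
    _ = (‖x‖ * B + c) * (‖x‖ + 2) * B / ‖k‖ ^ 3 := by field_simp; ring

theorem prod_sub_succ_mul_prod_add_succ (x : ℂ) (m : ℕ) :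
    (∏ j ∈ range m, (x - (j + 1))) * ∏ j ∈ range m, (x + (j + 1)) =
      (-1) ^ m * (m ! : ℂ) ^ 2 * ∏ j ∈ range m, (1 - x ^ 2 / ((j : ℂ) + 1) ^ 2) := by
  induction m with
  | zero => simp
  | succ m ih =>
    have hm : (m : ℂ) + 1 ≠ 0 := Nat.cast_add_one_ne_zero m
    simp only [prod_range_succ, Nat.factorial_succ, Nat.cast_mul, Nat.cast_add_one]
    rw [show ∀ a b c d : ℂ, a * c * (b * d) = (a * b) * (c * d) by intros; ring, ih]
    field_simp
    ring

theorem prod_sub_mul_prod_add_succ_div_factorial_sq (x : ℂ) (m : ℕ) :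
    (∏ j ∈ range (m + 1), (x - j)) / ((m + 1)! : ℂ) *
        ((∏ j ∈ range (m + 1), (x + (j + 1))) / ((m + 1)! : ℂ)) =
      (-1) ^ m * ((x + (m + 1 : ℕ)) * eulerSinProd x m / ((m + 1 : ℕ) : ℂ) ^ 2) := by
  have hm : (m ! : ℂ) ≠ 0 := Nat.cast_ne_zero.mpr m.factorial_ne_zero
  have hm1 : (m : ℂ) + 1 ≠ 0 := Nat.cast_add_one_ne_zero m
  have key := prod_sub_succ_mul_prod_add_succ x m
  rw [prod_range_succ', prod_range_succ, Nat.factorial_succ, eulerSinProd]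
  push_cast at key ⊢
  generalize ∏ j ∈ range m, (1 - x ^ 2 / ((j : ℂ) + 1) ^ 2) = P at key ⊢
  field_simp
  linear_combination (x * (x + (m + 1))) * key

/-- For every `x ∈ ℂ` there is a constant `C > 0` such that for all integers `k ≥ 1`,
`| binom(x,k)² binom(x+k,k)² − sin²(πx)/(π²k²) | ≤ C/k³`, where
`binom(x,k) = (∏_{j=0}^{k-1}(x-j))/k!` and `binom(x+k,k) = (∏_{j=1}^{k}(x+j))/k!`;
that is, the summand of the interpolated Apéry series satisfies
`binom(x,k)² binom(x+k,k)² = (sin(πx)/(πk))² + O(1/k³)` as `k → ∞`. -/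
theorem stmt_19 (x : ℂ) :
    ∃ C : ℝ, 0 < C ∧ ∀ k : ℕ, 1 ≤ k →
      ‖((∏ j ∈ Finset.range k, (x - j)) / (Nat.factorial k : ℂ)) ^ 2 *
          ((∏ j ∈ Finset.range k, (x + (j + 1))) / (Nat.factorial k : ℂ)) ^ 2 -
        Complex.sin (Real.pi * x) ^ 2 / ((Real.pi : ℂ) ^ 2 * (k : ℂ) ^ 2)‖ ≤
      C / (k : ℝ) ^ 3 := by
  set B := ‖x‖ * exp (2 * ‖x‖ ^ 2)
  set c := 2 * ‖x‖ ^ 3 * exp (2 * ‖x‖ ^ 2) ^ 2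
  refine ⟨(‖x‖ * B + c) * (‖x‖ + 2) * B + 1, by positivity, fun k hk => ?_⟩
  obtain ⟨m, rfl⟩ := Nat.exists_eq_add_of_le' hk
  have hsin : Complex.sin (π * x) ^ 2 / ((π : ℂ) ^ 2 * ((m + 1 : ℕ) : ℂ) ^ 2) =
      (Complex.sin (π * x) / π / ((m + 1 : ℕ) : ℂ)) ^ 2 := by
    rw [div_pow, div_pow, div_div]
  have hnorm : ‖((m + 1 : ℕ) : ℂ)‖ = ((m + 1 : ℕ) : ℝ) := Complex.norm_natCast _
  rw [← mul_pow, prod_sub_mul_prod_add_succ_div_factorial_sq, mul_pow, ← pow_mul,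
    pow_mul', neg_one_sq, one_pow, one_mul, hsin]
  calc _ ≤ (‖x‖ * B + c) * (‖x‖ + 2) * B / ((m + 1 : ℕ) : ℝ) ^ 3 := by
        refine hnorm ▸ norm_sq_sub_sq_le_of_approx _ _ _ _ ?_ (eulerSinProd.norm_le x m)
          (eulerSinProd.norm_sin_le x) ?_
        · rw [hnorm]; exact_mod_cast hk
        · rw [hnorm]; exact_mod_cast eulerSinProd.norm_sub_sin_le x m
    _ ≤ _ := by gcongr; linarith
end
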